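/- Let A and B be symmetric operators on a Hilbert space with B anti-self-adjoint on a common invariant domain (formally: for vectors in the domain). Then for every λ ∈ ℝ and m > 0, one has the quadratic form inequality λ[A,[B,A]] ≤ (1/(2m))A² − 2mλ² [A,B]², where [A,B]² denotes the square of the anti-hermitian commutator (a non-positive operator). Equivalently: for a vector ξ in the domain, λ⟨ξ, [A,[B,A]]ξ⟩ ≤ (1/(2m))⟨Aξ, Aξ⟩ − 2mλ²⟨ξ, [A,B]²ξ⟩. -/

import Mathlib

/-!
The commutator `C = [A, B]` of two symmetric operators is skew-symmetric, and
`[A, [B, A]] = [C, A]`. Hence `⟨ξ, [A, [B, A]] ξ⟩` has real part `-2 Re ⟨Aξ, Cξ⟩` and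
`⟨ξ, C² ξ⟩ = -‖Cξ‖²`, so the inequality is `‖Aξ + 2mλ Cξ‖² ≥ 0` divided by `2m`.
-/

open scoped InnerProductSpace
open RCLike

namespace LinearMap

variable {𝕜 E : Type*} [RCLike 𝕜] [NormedAddCommGroup E] [InnerProductSpace 𝕜 E]
  {A B C : E →ₗ[𝕜] E}

theorem IsSymmetric.inner_lie_apply_left (hA : A.IsSymmetric) (hB : B.IsSymmetric) (x y : E) :
    ⟪⁅A, B⁆ x, y⟫_𝕜 = -⟪x, ⁅A, B⁆ y⟫_𝕜 := by
  simp only [Ring.lie_def, sub_apply, Module.End.mul_apply, inner_sub_left, inner_sub_right,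
    hA _ y, hB _ y, hA x, hB x]
  ring

theorem re_inner_mul_self_apply_of_skew (hC : ∀ x y, ⟪C x, y⟫_𝕜 = -⟪x, C y⟫_𝕜) (x : E) :
    re ⟪x, (C * C) x⟫_𝕜 = -‖C x‖ ^ 2 := by
  rw [Module.End.mul_apply, ← neg_neg ⟪x, C (C x)⟫_𝕜, ← hC, map_neg, inner_self_eq_norm_sq]

theorem IsSymmetric.re_inner_lie_apply_of_skew (hA : A.IsSymmetric)
    (hC : ∀ x y, ⟪C x, y⟫_𝕜 = -⟪x, C y⟫_𝕜) (x : E) :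
    re ⟪x, ⁅C, A⁆ x⟫_𝕜 = -(2 * re ⟪A x, C x⟫_𝕜) := by
  have hCA : ⟪x, C (A x)⟫_𝕜 = -⟪C x, A x⟫_𝕜 := by rw [hC, neg_neg]
  rw [Ring.lie_def, sub_apply, Module.End.mul_apply, Module.End.mul_apply, inner_sub_right, hCA,
    ← hA x (C x), map_sub, map_neg, ← inner_re_symm]
  ring

end LinearMap

theorem neg_two_mul_re_inner_le {𝕜 E : Type*} [RCLike 𝕜] [NormedAddCommGroup E]
    [InnerProductSpace 𝕜 E] (x y : E) (s : ℝ) {t : ℝ} (ht : 0 < t) :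
    -(2 * s * re ⟪x, y⟫_𝕜) ≤ ‖x‖ ^ 2 / t + t * s ^ 2 * ‖y‖ ^ 2 := by
  have h := norm_add_sq (𝕜 := 𝕜) x (((t * s : ℝ) : 𝕜) • y)
  rw [inner_smul_real_right, norm_smul, RCLike.norm_ofReal, real_smul_eq_coe_mul,
    re_ofReal_mul] at h
  rw [div_add' _ _ _ ht.ne', le_div_iff₀ ht]
  nlinarith [sq_nonneg ‖x + ((t * s : ℝ) : 𝕜) • y‖, sq_abs (t * s)]

/-- The Lieb–Yamazaki commutator inequality: for symmetric `A`, `B` and any `λ ∈ ℝ`, `m > 0`,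
`λ⟨ξ, [A,[B,A]]ξ⟩ ≤ (1/(2m))⟨Aξ, Aξ⟩ − 2mλ²⟨ξ, [A,B]²ξ⟩` as quadratic forms. -/
theorem lieb_yamazaki_commutator_bound
    {H : Type*} [NormedAddCommGroup H] [InnerProductSpace ℂ H]
    (A B : H →L[ℂ] H)
    (hA : ∀ x y : H, ⟪A x, y⟫_ℂ = ⟪x, A y⟫_ℂ)
    (hB : ∀ x y : H, ⟪B x, y⟫_ℂ = ⟪x, B y⟫_ℂ)
    (lam m : ℝ) (hm : 0 < m) (ξ : H) :
    lam * (⟪ξ, (A.comp (B.comp A - A.comp B) - (B.comp A - A.comp B).comp A) ξ⟫_ℂ).re ≤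
      (1 / (2 * m)) * (⟪A ξ, A ξ⟫_ℂ).re -
        2 * m * lam ^ 2 *
          (⟪ξ, ((A.comp B - B.comp A).comp (A.comp B - B.comp A)) ξ⟫_ℂ).re := by
  let C : H →ₗ[ℂ] H := ⁅(A : H →ₗ[ℂ] H), (B : H →ₗ[ℂ] H)⁆
  have hC : ∀ x y, ⟪C x, y⟫_ℂ = -⟪x, C y⟫_ℂ :=
    LinearMap.IsSymmetric.inner_lie_apply_left hA hB
  have hlie : (A.comp (B.comp A - A.comp B) - (B.comp A - A.comp B).comp A) ξ
      = ⁅C, (A : H →ₗ[ℂ] H)⁆ ξ := by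
    simp only [C, ContinuousLinearMap.comp_sub, ContinuousLinearMap.sub_comp, sub_apply,
      ContinuousLinearMap.comp_apply, Ring.lie_def, LinearMap.sub_apply, Module.End.mul_apply,
      ContinuousLinearMap.coe_coe, map_sub]
    abel
  have hlieξ : (⟪ξ, ⁅C, (A : H →ₗ[ℂ] H)⁆ ξ⟫_ℂ).re = -(2 * (⟪A ξ, C ξ⟫_ℂ).re) :=
    LinearMap.IsSymmetric.re_inner_lie_apply_of_skew hA hC ξ
  have hCCξ : (⟪ξ, ((A.comp B - B.comp A).comp (A.comp B - B.comp A)) ξ⟫_ℂ).re = -‖C ξ‖ ^ 2 :=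
    LinearMap.re_inner_mul_self_apply_of_skew hC ξ
  have hAξ : (⟪A ξ, A ξ⟫_ℂ).re = ‖A ξ‖ ^ 2 := inner_self_eq_norm_sq (𝕜 := ℂ) (A ξ)
  have hyoung := neg_two_mul_re_inner_le (𝕜 := ℂ) (A ξ) (C ξ) lam (by positivity : 0 < 2 * m)
  rw [RCLike.re_to_complex] at hyoung
  rw [hlie, hlieξ, hCCξ, hAξ]
  linear_combination hyoung
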